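/- arXiv:math/0209136 — 2 statements merged into one kernel-verified Lean document; each statement's English description precedes it below -/
import Mathlib

section
/- Fix nonnegative integers c, d and a word w of length c+d in the letters h and v containing exactly c letters h and d letters v. Let μ and ν be partitions each having at most c parts larger than d, and let π be the partition with w-notation π^w_i = μ^w_i + ν^w_i. Then for every partition ρ with c^ρ_{μν} ≠ 0, the tuple ρ^w of piece sizes of the greedy w-decomposition of ρ is less than or equal to π^w in lexicographic order; that is, π is the maximal partition in the w-ordering appearing in the Schur expansion of s_μ s_ν. -/
open scoped Classical

/-!  Common definitions: the ring `Λ` of symmetric functions is realized inside the ring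
`MvPowerSeries ℕ ℚ` of formal power series in countably many variables `x₀, x₁, x₂, …`
with rational coefficients; Schur functions are defined by their monomial expansion over
semistandard Young tableaux, and Littlewood–Richardson coefficients are defined as the
number of Littlewood–Richardson fillings (semistandard skew fillings whose reverse reading
word is a lattice word), which is the coefficient of `s_ν` in `s_lam ⬝ s_μ`. -/

/-- The Schur function `s_μ` of a Young diagram `μ`: the coefficient of the monomial `x^m`
is the number of semistandard Young tableaux of shape `μ` with weight `m`. -/
noncomputable def schur (μ : YoungDiagram) : MvPowerSeries ℕ ℚ :=
  fun m : ℕ →₀ ℕ =>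
    (Set.ncard {T : SemistandardYoungTableau μ |
        ∀ k : ℕ, (μ.cells.filter fun c => T c.1 c.2 = k).card = m k} : ℚ)

/-- A Littlewood–Richardson filling of the skew shape `ν/lam` with content `μ`:
a filling of the cells of `ν` not in `lam` with entries `0, 1, 2, …` that is weakly
increasing along rows, strictly increasing down columns, in which the entry `k` occurs
`μ.rowLen k` times, and such that reading right-to-left along rows, top to bottom, every
initial segment contains at least as many `k`'s as `(k+1)`'s (the lattice word condition). -/
structure LRFilling (ν lam μ : YoungDiagram) : Type where
  le : lam ≤ ν
  entry : ℕ → ℕ → ℕ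
  zeros : ∀ i j, (i, j) ∉ ν.cells \ lam.cells → entry i j = 0
  row_weak : ∀ i j, (i, j) ∈ ν.cells \ lam.cells → (i, j + 1) ∈ ν.cells \ lam.cells →
    entry i j ≤ entry i (j + 1)
  col_strict : ∀ i j, (i, j) ∈ ν.cells \ lam.cells → (i + 1, j) ∈ ν.cells \ lam.cells →
    entry i j < entry (i + 1) j
  content : ∀ k, ((ν.cells \ lam.cells).filter fun c => entry c.1 c.2 = k).card = μ.rowLen k
  lattice : ∀ i j k,
    ((ν.cells \ lam.cells).filter fun c =>
        (c.1 < i ∨ (c.1 = i ∧ j ≤ c.2)) ∧ entry c.1 c.2 = k + 1).card ≤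
    ((ν.cells \ lam.cells).filter fun c =>
        (c.1 < i ∨ (c.1 = i ∧ j ≤ c.2)) ∧ entry c.1 c.2 = k).card

/-- The Littlewood–Richardson coefficient `c^ν_{lam,μ}`, i.e. the coefficient of the
Schur function `s_ν` in the product `s_lam ⬝ s_μ`. -/
noncomputable def lrCoeff (ν lam μ : YoungDiagram) : ℕ :=
  Nat.card (LRFilling ν lam μ)

/-- The `a × b` rectangular Young diagram `R = (b^a)`. -/
def rect (a b : ℕ) : YoungDiagram :=
  ⟨Finset.range a ×ˢ Finset.range b, by
    rintro ⟨i, j⟩ ⟨i', j'⟩ ⟨hi, hj⟩ h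
    simp only [Finset.coe_product, Finset.coe_range, Set.mem_prod, Set.mem_Iio] at h ⊢
    exact ⟨lt_of_le_of_lt hi h.1, lt_of_le_of_lt hj h.2⟩⟩

/-- The complement `μᶜ` of `μ` in the `a × b` rectangle: the boxes of the rectangle
not in `μ`, rotated by 180°; its parts are `(μᶜ)ᵢ = b - μ_{a+1-i}` for `1 ≤ i ≤ a`. -/
def rectCompl (a b : ℕ) (μ : YoungDiagram) : YoungDiagram :=
  ⟨(rect a b).cells.filter fun c => (a - 1 - c.1, b - 1 - c.2) ∉ μ, by
    rintro ⟨i, j⟩ ⟨i', j'⟩ ⟨hi, hj⟩ h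
    simp only [Finset.coe_filter, Set.mem_setOf_eq] at h ⊢
    refine ⟨(rect a b).isLowerSet ⟨hi, hj⟩ h.1, fun hmem => h.2 ?_⟩
    exact μ.isLowerSet ⟨Nat.sub_le_sub_left hi _, Nat.sub_le_sub_left hj _⟩ hmem⟩

/-- Greedy `w`-decomposition piece sizes, starting from the state where `r` horizontal and
`c` vertical pieces have already been taken.  The letter `true` stands for `h` (a horizontal
piece: the rest of row `r`), `false` for `v` (a vertical piece: the rest of column `c`). -/
def wPieces : List Bool → ℕ → ℕ → YoungDiagram → List ℕ
  | [], _, _, _ => []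
  | true :: w, r, c, lam => (lam.rowLen r - c) :: wPieces w (r + 1) c lam
  | false :: w, r, c, lam => (lam.colLen c - r) :: wPieces w r (c + 1) lam

/-- The `w`-notation `lam^w` of a partition `lam`: the list of piece sizes of its greedy
`w`-decomposition. -/
def wNotation (w : List Bool) (lam : YoungDiagram) : List ℕ :=
  wPieces w 0 0 lam

/-- `lexLE l₁ l₂` : `l₁ ≤ l₂` in lexicographic order. -/
def lexLE (l₁ l₂ : List ℕ) : Prop :=
  l₁ = l₂ ∨ List.Lex (· < ·) l₁ l₂

/-- Remove the first row of a Young diagram. -/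
def stripRow (lam : YoungDiagram) : YoungDiagram :=
  ⟨(lam.cells.filter fun c => 0 < c.1).image fun c => (c.1 - 1, c.2), by
    rintro ⟨i', j'⟩ ⟨i, j⟩ ⟨hi, hj⟩ h
    simp only [Finset.coe_image, Finset.coe_filter, Set.mem_image, Set.mem_setOf_eq,
      Prod.exists] at h ⊢
    obtain ⟨x, y, ⟨hxy, hx⟩, heq⟩ := h
    obtain ⟨hx1, rfl⟩ : x - 1 = i' ∧ y = j' := by simpa [Prod.ext_iff] using heq
    exact ⟨i + 1, j, ⟨lam.isLowerSet (b := (i + 1, j)) ⟨by omega, by simpa using hj⟩ hxy,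
      by omega⟩, by simp⟩⟩

/-- Remove the first column of a Young diagram. -/
def stripCol (lam : YoungDiagram) : YoungDiagram :=
  (stripRow lam.transpose).transpose

/-- For `a`, `b` both odd, `lam` is almost self-complementary in the `a × b` rectangle if
`lam` is contained in the rectangle and the diagrams of `lam` and of its complement differ
only in which one contains the central box (row `(a+1)/2`, column `(b+1)/2`, 1-indexed). -/
def AlmostSelfCompl (a b : ℕ) (lam : YoungDiagram) : Prop :=
  lam ≤ rect a b ∧
    lam.cells \ (rectCompl a b lam).cells ∪ (rectCompl a b lam).cells \ lam.cells =
      {((a - 1) / 2, (b - 1) / 2)}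

section Infra

open YoungDiagram

lemma rowLen_eq_of_mem_iff {lam : YoungDiagram} {i m : ℕ}
    (h : ∀ j, (i, j) ∈ lam ↔ j < m) : lam.rowLen i = m := by
  rcases Nat.lt_trichotomy (lam.rowLen i) m with h' | h' | h'
  · have := mem_iff_lt_rowLen.mp ((h _).mpr h')
    omega
  · exact h'
  · have := (h _).mp (mem_iff_lt_rowLen.mpr h')
    omega

lemma colLen_eq_of_mem_iff {lam : YoungDiagram} {j m : ℕ}
    (h : ∀ i, (i, j) ∈ lam ↔ i < m) : lam.colLen j = m := by
  rcases Nat.lt_trichotomy (lam.colLen j) m with h' | h' | h'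
  · have := mem_iff_lt_colLen.mp ((h _).mpr h')
    omega
  · exact h'
  · have := (h _).mp (mem_iff_lt_colLen.mpr h')
    omega

lemma mem_stripRow {lam : YoungDiagram} {i j : ℕ} :
    (i, j) ∈ stripRow lam ↔ (i + 1, j) ∈ lam := by
  constructor
  · intro h
    change (i, j) ∈ ((lam.cells.filter fun c => 0 < c.1).image fun c => (c.1 - 1, c.2)) at h
    simp only [stripRow, YoungDiagram.mem_mk, Finset.mem_image, Finset.mem_filter,
      Prod.exists] at h
    obtain ⟨x, y, ⟨hxy, hx⟩, heq⟩ := h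
    obtain ⟨h1, rfl⟩ : x - 1 = i ∧ y = j := by simpa [Prod.ext_iff] using heq
    have : x = i + 1 := by omega
    rwa [← this]
  · intro h
    change (i, j) ∈ ((lam.cells.filter fun c => 0 < c.1).image fun c => (c.1 - 1, c.2))
    simp only [stripRow, YoungDiagram.mem_mk, Finset.mem_image, Finset.mem_filter,
      Prod.exists]
    exact ⟨i + 1, j, ⟨by simpa using h, by omega⟩, by simp⟩

lemma mem_stripCol {lam : YoungDiagram} {i j : ℕ} :
    (i, j) ∈ stripCol lam ↔ (i, j + 1) ∈ lam := by
  simp only [stripCol, YoungDiagram.mem_transpose]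
  show ((j, i) : ℕ × ℕ) ∈ stripRow lam.transpose ↔ _
  rw [mem_stripRow, YoungDiagram.mem_transpose, Prod.swap]

lemma rowLen_stripRow {lam : YoungDiagram} {i : ℕ} :
    (stripRow lam).rowLen i = lam.rowLen (i + 1) :=
  rowLen_eq_of_mem_iff fun j => by rw [mem_stripRow, mem_iff_lt_rowLen]

lemma colLen_stripRow {lam : YoungDiagram} {j : ℕ} :
    (stripRow lam).colLen j = lam.colLen j - 1 :=
  colLen_eq_of_mem_iff fun i => by
    rw [mem_stripRow, mem_iff_lt_colLen]; omega

lemma colLen_stripCol {lam : YoungDiagram} {j : ℕ} :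
    (stripCol lam).colLen j = lam.colLen (j + 1) :=
  colLen_eq_of_mem_iff fun i => by rw [mem_stripCol, mem_iff_lt_colLen]

lemma rowLen_stripCol {lam : YoungDiagram} {i : ℕ} :
    (stripCol lam).rowLen i = lam.rowLen i - 1 :=
  rowLen_eq_of_mem_iff fun j => by
    rw [mem_stripCol, mem_iff_lt_rowLen]; omega

lemma stripRow_mono {mu nu : YoungDiagram} (h : mu ≤ nu) : stripRow mu ≤ stripRow nu := by
  rintro ⟨i, j⟩ hij
  rw [mem_stripRow] at hij ⊢
  exact h hij

lemma stripCol_mono {mu nu : YoungDiagram} (h : mu ≤ nu) : stripCol mu ≤ stripCol nu := by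
  rintro ⟨i, j⟩ hij
  rw [mem_stripCol] at hij ⊢
  exact h hij

lemma wPieces_stripRow (w : List Bool) (r c : ℕ) (lam : YoungDiagram) :
    wPieces w (r + 1) c lam = wPieces w r c (stripRow lam) := by
  induction w generalizing r c with
  | nil => rfl
  | cons b w ih =>
    cases b
    · simp only [wPieces, colLen_stripRow, ih]
      congr 1
      omega
    · simp only [wPieces, rowLen_stripRow, ih]

lemma wPieces_stripCol (w : List Bool) (r c : ℕ) (lam : YoungDiagram) :
    wPieces w r (c + 1) lam = wPieces w r c (stripCol lam) := by
  induction w generalizing r c with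
  | nil => rfl
  | cons b w ih =>
    cases b
    · simp only [wPieces, colLen_stripCol, ih]
    · simp only [wPieces, rowLen_stripCol, ih]
      congr 1
      omega

end Infra

section Hside

open YoungDiagram

variable {ρ μ ν : YoungDiagram}

lemma rowLen_le_of_le (h : μ ≤ ρ) (i : ℕ) : μ.rowLen i ≤ ρ.rowLen i := by
  by_contra hc
  push_neg at hc
  have := h (mem_iff_lt_rowLen.mpr hc : (i, ρ.rowLen i) ∈ μ)
  rw [mem_iff_lt_rowLen] at this
  omega

lemma colLen_le_of_le (h : μ ≤ ρ) (j : ℕ) : μ.colLen j ≤ ρ.colLen j := by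
  by_contra hc
  push_neg at hc
  have := h (mem_iff_lt_colLen.mpr hc : (ρ.colLen j, j) ∈ μ)
  rw [mem_iff_lt_colLen] at this
  omega

lemma mem_skew_iff {a b : ℕ} :
    (a, b) ∈ ρ.cells \ μ.cells ↔ (a, b) ∈ ρ ∧ (a, b) ∉ μ := by
  simp [Finset.mem_sdiff, YoungDiagram.mem_cells]

namespace LRFilling

/-- The content value of any filled cell indexes a nonempty row of `ν`. -/
lemma rowLen_entry_pos (F : LRFilling ρ μ ν) {a b : ℕ} (h : (a, b) ∈ ρ.cells \ μ.cells) :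
    0 < ν.rowLen (F.entry a b) := by
  rw [← F.content (F.entry a b), Finset.card_pos]
  exact ⟨(a, b), Finset.mem_filter.mpr ⟨h, rfl⟩⟩

/-- If `(0,j)` is in the skew shape and `(0,j+1) ∉ ρ`, then the entry there is `0`. -/
lemma entry_zero_of_rightmost (F : LRFilling ρ μ ν) {j : ℕ} (hj : (0, j) ∈ ρ.cells \ μ.cells)
    (hnot : ((0 : ℕ), j + 1) ∉ ρ) : F.entry 0 j = 0 := by
  by_contra hne
  set t := F.entry 0 j with ht
  have htpos : 1 ≤ t := Nat.one_le_iff_ne_zero.mpr hne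
  have hlat := F.lattice 0 j (t - 1)
  have h0 : ((ρ.cells \ μ.cells).filter fun c =>
      (c.1 < 0 ∨ (c.1 = 0 ∧ j ≤ c.2)) ∧ F.entry c.1 c.2 = t - 1).card = 0 := by
    rw [Finset.card_eq_zero, Finset.filter_eq_empty_iff]
    rintro ⟨a, b⟩ hab ⟨hcond, hent⟩
    dsimp only at hcond hent
    rcases hcond with h | ⟨rfl, hb⟩
    · omega
    · have hbj : b = j := by
        by_contra hbe
        have hb1 : j + 1 ≤ b := by omega
        have : ((0 : ℕ), b) ∈ ρ := (mem_skew_iff.mp hab).1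
        exact hnot (ρ.up_left_mem le_rfl hb1 this)
      subst hbj
      omega
  have h1 : 0 < ((ρ.cells \ μ.cells).filter fun c =>
      (c.1 < 0 ∨ (c.1 = 0 ∧ j ≤ c.2)) ∧ F.entry c.1 c.2 = t - 1 + 1).card := by
    rw [Finset.card_pos]
    exact ⟨(0, j), Finset.mem_filter.mpr ⟨hj, Or.inr ⟨rfl, le_rfl⟩, by dsimp only; omega⟩⟩
  omega

/-- Every entry in row `0` of the skew shape is `0`. -/
lemma entry_row_zero (F : LRFilling ρ μ ν) {j : ℕ} (hj : (0, j) ∈ ρ.cells \ μ.cells) :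
    F.entry 0 j = 0 := by
  suffices h : ∀ n j, (0, j) ∈ ρ.cells \ μ.cells → ρ.rowLen 0 ≤ j + n + 1 → F.entry 0 j = 0 by
    exact h (ρ.rowLen 0) j hj (by omega)
  intro n
  induction n with
  | zero =>
    intro j hj hle
    refine F.entry_zero_of_rightmost hj fun hmem => ?_
    rw [mem_iff_lt_rowLen] at hmem
    omega
  | succ n ih =>
    intro j hj hle
    by_cases hnext : ((0 : ℕ), j + 1) ∈ ρ.cells \ μ.cells
    · have h1 := F.row_weak 0 j hj hnext
      have h2 := ih (j + 1) hnext (by omega)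
      omega
    · refine F.entry_zero_of_rightmost hj fun hmem => ?_
      have : ((0 : ℕ), j + 1) ∉ μ := fun hm =>
        (mem_skew_iff.mp hj).2 (μ.up_left_mem le_rfl (by omega) hm)
      exact hnext (mem_skew_iff.mpr ⟨hmem, this⟩)

/-- Lemma A (h-step): `ρ₁ ≤ μ₁ + ν₁`. -/
lemma rowLen_zero_le (F : LRFilling ρ μ ν) : ρ.rowLen 0 ≤ μ.rowLen 0 + ν.rowLen 0 := by
  by_cases h : ρ.rowLen 0 ≤ μ.rowLen 0
  · omega
  · have hcard : (Finset.Ico (μ.rowLen 0) (ρ.rowLen 0)).card ≤ ν.rowLen 0 := by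
      rw [← F.content 0]
      apply Finset.card_le_card_of_injOn (fun j => ((0 : ℕ), j))
      · intro j hj
        rw [Finset.mem_coe, Finset.mem_Ico] at hj
        have hmem : ((0 : ℕ), j) ∈ ρ.cells \ μ.cells := mem_skew_iff.mpr
          ⟨mem_iff_lt_rowLen.mpr hj.2, fun hm => by
            have := mem_iff_lt_rowLen.mp hm; omega⟩
        exact Finset.mem_filter.mpr ⟨hmem, F.entry_row_zero hmem⟩
      · intro a _ b _ hab
        simpa using hab
    rw [Nat.card_Ico] at hcard
    omega

/-- In the equality case, every skew cell in a row `≥ 1` has a positive entry. -/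
lemma one_le_entry_of_row_pos (F : LRFilling ρ μ ν)
    (heq : ρ.rowLen 0 = μ.rowLen 0 + ν.rowLen 0)
    {a b : ℕ} (hab : (a, b) ∈ ρ.cells \ μ.cells) (ha : 1 ≤ a) : 1 ≤ F.entry a b := by
  by_contra hc
  have hent : F.entry a b = 0 := by omega
  have hMR : μ.rowLen 0 ≤ ρ.rowLen 0 := rowLen_le_of_le F.le 0
  set I : Finset (ℕ × ℕ) := (Finset.Ico (μ.rowLen 0) (ρ.rowLen 0)).image (fun j => (0, j))
    with hI
  set Z : Finset (ℕ × ℕ) := (ρ.cells \ μ.cells).filter (fun c => F.entry c.1 c.2 = 0) with hZ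
  have hIcard : I.card = ν.rowLen 0 := by
    rw [hI, Finset.card_image_of_injective _ (fun x y hxy => by simpa using hxy),
      Nat.card_Ico]
    omega
  have hZcard : Z.card = ν.rowLen 0 := F.content 0
  have hsub : I ⊆ Z := by
    intro c hc'
    rw [hI, Finset.mem_image] at hc'
    obtain ⟨j, hj, rfl⟩ := hc'
    rw [Finset.mem_Ico] at hj
    have hmem : ((0 : ℕ), j) ∈ ρ.cells \ μ.cells := mem_skew_iff.mpr
      ⟨mem_iff_lt_rowLen.mpr hj.2, fun hm => by
        have := mem_iff_lt_rowLen.mp hm; omega⟩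
    exact Finset.mem_filter.mpr ⟨hmem, F.entry_row_zero hmem⟩
  have hZI : I = Z := Finset.eq_of_subset_of_card_le hsub (by omega)
  have hmemZ : (a, b) ∈ Z := Finset.mem_filter.mpr ⟨hab, hent⟩
  rw [← hZI, hI, Finset.mem_image] at hmemZ
  obtain ⟨j, _, hj⟩ := hmemZ
  simp only [Prod.mk.injEq] at hj
  omega

lemma mem_skew_stripRow {a b : ℕ} :
    (a, b) ∈ (stripRow ρ).cells \ (stripRow μ).cells ↔ (a + 1, b) ∈ ρ.cells \ μ.cells := by
  rw [mem_skew_iff, mem_skew_iff, mem_stripRow, mem_stripRow]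

/-- Lemma B (h-step): in the equality case, an LR filling descends to stripped rows. -/
lemma stripRow_nonempty (F : LRFilling ρ μ ν)
    (heq : ρ.rowLen 0 = μ.rowLen 0 + ν.rowLen 0) :
    Nonempty (LRFilling (stripRow ρ) (stripRow μ) (stripRow ν)) := by
  have key : ∀ (i j m : ℕ),
      (((stripRow ρ).cells \ (stripRow μ).cells).filter fun c =>
        (c.1 < i ∨ (c.1 = i ∧ j ≤ c.2)) ∧ F.entry (c.1 + 1) c.2 - 1 = m).card =
      ((ρ.cells \ μ.cells).filter fun c =>
        (c.1 < i + 1 ∨ (c.1 = i + 1 ∧ j ≤ c.2)) ∧ F.entry c.1 c.2 = m + 1).card := by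
    intro i j m
    apply Finset.card_bij (fun c _ => (c.1 + 1, c.2))
    · rintro ⟨a, b⟩ hab
      rw [Finset.mem_filter] at hab
      obtain ⟨hmem, hcond, hent⟩ := hab
      dsimp only at hcond hent
      rw [mem_skew_stripRow] at hmem
      have hpos : 1 ≤ F.entry (a + 1) b := F.one_le_entry_of_row_pos heq hmem (by omega)
      exact Finset.mem_filter.mpr ⟨hmem, by dsimp only; omega, by dsimp only; omega⟩
    · rintro ⟨a, b⟩ _ ⟨a', b'⟩ _ hab
      simp only [Prod.mk.injEq] at hab ⊢
      omega
    · rintro ⟨x, y⟩ hxy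
      rw [Finset.mem_filter] at hxy
      obtain ⟨hmem, hcond, hent⟩ := hxy
      dsimp only at hcond hent
      have hx : 1 ≤ x := by
        by_contra hc
        have hx0 : x = 0 := by omega
        subst hx0
        have := F.entry_row_zero hmem
        omega
      have hx1 : x - 1 + 1 = x := by omega
      have hm1 : ((x - 1 : ℕ), y) ∈ (stripRow ρ).cells \ (stripRow μ).cells := by
        rw [mem_skew_stripRow, hx1]
        exact hmem
      have hm2 : x - 1 < i ∨ (x - 1 = i ∧ j ≤ y) := by omega
      have hm3 : F.entry (x - 1 + 1) y - 1 = m := by rw [hx1]; omega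
      exact ⟨(x - 1, y), Finset.mem_filter.mpr ⟨hm1, hm2, hm3⟩,
        by show ((x - 1 + 1 : ℕ), y) = (x, y); rw [hx1]⟩
  have key0 : ∀ m : ℕ,
      (((stripRow ρ).cells \ (stripRow μ).cells).filter fun c =>
        F.entry (c.1 + 1) c.2 - 1 = m).card =
      ((ρ.cells \ μ.cells).filter fun c => F.entry c.1 c.2 = m + 1).card := by
    intro m
    apply Finset.card_bij (fun c _ => (c.1 + 1, c.2))
    · rintro ⟨a, b⟩ hab
      rw [Finset.mem_filter] at hab
      obtain ⟨hmem, hent⟩ := hab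
      dsimp only at hent
      rw [mem_skew_stripRow] at hmem
      have hpos : 1 ≤ F.entry (a + 1) b := F.one_le_entry_of_row_pos heq hmem (by omega)
      exact Finset.mem_filter.mpr ⟨hmem, by dsimp only; omega⟩
    · rintro ⟨a, b⟩ _ ⟨a', b'⟩ _ hab
      simp only [Prod.mk.injEq] at hab ⊢
      omega
    · rintro ⟨x, y⟩ hxy
      rw [Finset.mem_filter] at hxy
      obtain ⟨hmem, hent⟩ := hxy
      dsimp only at hent
      have hx : 1 ≤ x := by
        by_contra hc
        have hx0 : x = 0 := by omega
        subst hx0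
        have := F.entry_row_zero hmem
        omega
      have hx1 : x - 1 + 1 = x := by omega
      have hm1 : ((x - 1 : ℕ), y) ∈ (stripRow ρ).cells \ (stripRow μ).cells := by
        rw [mem_skew_stripRow, hx1]
        exact hmem
      have hm3 : F.entry (x - 1 + 1) y - 1 = m := by rw [hx1]; omega
      exact ⟨(x - 1, y), Finset.mem_filter.mpr ⟨hm1, hm3⟩,
        by show ((x - 1 + 1 : ℕ), y) = (x, y); rw [hx1]⟩
  refine ⟨⟨stripRow_mono F.le, fun a b => F.entry (a + 1) b - 1, ?_, ?_, ?_, ?_, ?_⟩⟩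
  · intro a b hab
    rw [mem_skew_stripRow] at hab
    have := F.zeros (a + 1) b hab
    show F.entry (a + 1) b - 1 = 0
    omega
  · intro a b h1 h2
    rw [mem_skew_stripRow] at h1 h2
    exact Nat.sub_le_sub_right (F.row_weak (a + 1) b h1 h2) 1
  · intro a b h1 h2
    rw [mem_skew_stripRow] at h1 h2
    have hpos : 1 ≤ F.entry (a + 1) b := F.one_le_entry_of_row_pos heq h1 (by omega)
    have := F.col_strict (a + 1) b h1 h2
    show F.entry (a + 1) b - 1 < F.entry (a + 1 + 1) b - 1
    omega
  · intro k
    rw [rowLen_stripRow, ← F.content (k + 1)]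
    exact key0 k
  · intro i j k
    exact le_of_eq_of_le (key i j (k + 1))
      (le_of_le_of_eq (F.lattice (i + 1) j (k + 1)) (key i j k).symm)

end LRFilling

end Hside

section Vside

open YoungDiagram

variable {ρ μ ν : YoungDiagram}

namespace LRFilling

lemma entry_col_lower (F : LRFilling ρ μ ν) {a c : ℕ} (h : (a, c) ∈ ρ.cells \ μ.cells) :
    a - μ.colLen c ≤ F.entry a c := by
  suffices hs : ∀ s a, a = μ.colLen c + s → (a, c) ∈ ρ.cells \ μ.cells → s ≤ F.entry a c by
    have hC : μ.colLen c ≤ a := by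
      have := (mem_skew_iff.mp h).2
      rw [mem_iff_lt_colLen] at this
      omega
    exact Nat.sub_le_iff_le_add.mpr (by
      have := hs (a - μ.colLen c) a (by omega) h
      omega)
  intro s
  induction s with
  | zero => intro a _ _; exact Nat.zero_le _
  | succ s ih =>
    intro a ha hmem
    have ha1 : 1 ≤ a := by omega
    have hmem' : (a - 1, c) ∈ ρ.cells \ μ.cells := by
      rw [mem_skew_iff]
      constructor
      · exact ρ.up_left_mem (by omega) le_rfl (mem_skew_iff.mp hmem).1
      · rw [mem_iff_lt_colLen]
        omega
    have hih := ih (a - 1) (by omega) hmem'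
    have hcs := F.col_strict (a - 1) c hmem' (by
      have : a - 1 + 1 = a := by omega
      rw [this]; exact hmem)
    have : a - 1 + 1 = a := by omega
    rw [this] at hcs
    omega

lemma entry_lt_colLen (F : LRFilling ρ μ ν) {a b : ℕ} (h : (a, b) ∈ ρ.cells \ μ.cells) :
    F.entry a b < ν.colLen 0 := by
  have := F.rowLen_entry_pos h
  have hmem : (F.entry a b, 0) ∈ ν := mem_iff_lt_rowLen.mpr this
  exact mem_iff_lt_colLen.mp hmem

/-- Lemma A (v-step): `ρ'₁ ≤ μ'₁ + ν'₁`. -/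
lemma colLen_zero_le (F : LRFilling ρ μ ν) : ρ.colLen 0 ≤ μ.colLen 0 + ν.colLen 0 := by
  by_cases h : ρ.colLen 0 ≤ μ.colLen 0
  · omega
  · have hmem : (ρ.colLen 0 - 1, 0) ∈ ρ.cells \ μ.cells := by
      rw [mem_skew_iff, mem_iff_lt_colLen, mem_iff_lt_colLen]
      omega
    have h1 := F.entry_col_lower hmem
    have h2 := F.entry_lt_colLen hmem
    omega

lemma entry_col_zero (F : LRFilling ρ μ ν)
    (heq : ρ.colLen 0 = μ.colLen 0 + ν.colLen 0)
    {a : ℕ} (h : (a, 0) ∈ ρ.cells \ μ.cells) : F.entry a 0 = a - μ.colLen 0 := by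
  have hC : μ.colLen 0 ≤ a := by
    have := (mem_skew_iff.mp h).2
    rw [mem_iff_lt_colLen] at this
    omega
  have haρ : a < ρ.colLen 0 := by
    have := (mem_skew_iff.mp h).1
    rwa [mem_iff_lt_colLen] at this
  have hup : ∀ n a, ρ.colLen 0 = a + n + 1 → (a, 0) ∈ ρ.cells \ μ.cells →
      F.entry a 0 + n < ν.colLen 0 := by
    intro n
    induction n with
    | zero =>
      intro a _ hmem
      have := F.entry_lt_colLen hmem
      omega
    | succ n ih =>
      intro a ha hmem
      have hmem' : (a + 1, 0) ∈ ρ.cells \ μ.cells := by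
        rw [mem_skew_iff, mem_iff_lt_colLen, mem_iff_lt_colLen]
        constructor
        · omega
        · rw [← mem_iff_lt_colLen] at *
          intro hc
          exact (mem_skew_iff.mp hmem).2 (μ.up_left_mem (by omega) le_rfl hc)
      have hcs := F.col_strict a 0 hmem hmem'
      have := ih (a + 1) (by omega) hmem'
      omega
  have h1 := F.entry_col_lower h
  have h2 := hup (ρ.colLen 0 - 1 - a) a (by omega) h
  omega

lemma col0_mem (F : LRFilling ρ μ ν)
    (heq : ρ.colLen 0 = μ.colLen 0 + ν.colLen 0)
    {k : ℕ} (hk : k < ν.colLen 0) :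
    (μ.colLen 0 + k, 0) ∈ ρ.cells \ μ.cells ∧ F.entry (μ.colLen 0 + k) 0 = k := by
  have hmem : (μ.colLen 0 + k, 0) ∈ ρ.cells \ μ.cells := by
    rw [mem_skew_iff, mem_iff_lt_colLen, mem_iff_lt_colLen]
    omega
  refine ⟨hmem, ?_⟩
  rw [F.entry_col_zero heq hmem]
  omega

lemma entry_lt_of_mem (F : LRFilling ρ μ ν) {a b k : ℕ}
    (h : (a, b) ∈ ρ.cells \ μ.cells) (hent : F.entry a b = k) : k < ν.colLen 0 := by
  rw [← hent]
  exact F.entry_lt_colLen h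

lemma row_le_of_entry (F : LRFilling ρ μ ν) {a b : ℕ}
    (h : (a, b) ∈ ρ.cells \ μ.cells) : a ≤ μ.colLen 0 + F.entry a b := by
  have h1 := F.entry_col_lower h
  have h2 : μ.colLen b ≤ μ.colLen 0 := μ.colLen_anti 0 b (Nat.zero_le b)
  omega

lemma mem_skew_stripCol {a b : ℕ} :
    (a, b) ∈ (stripCol ρ).cells \ (stripCol μ).cells ↔ (a, b + 1) ∈ ρ.cells \ μ.cells := by
  rw [mem_skew_iff, mem_skew_iff, mem_stripCol, mem_stripCol]

/-- Lemma B (v-step): in the equality case, an LR filling descends to stripped columns. -/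
lemma stripCol_nonempty (F : LRFilling ρ μ ν)
    (heq : ρ.colLen 0 = μ.colLen 0 + ν.colLen 0) :
    Nonempty (LRFilling (stripCol ρ) (stripCol μ) (stripCol ν)) := by
  -- counting identity relating new counts to old counts
  have hval : ∀ a b k : ℕ, (a, b) ∈ ρ.cells \ μ.cells → F.entry a b = k → b = 0 →
      a = μ.colLen 0 + k := by
    intro a b k hmem hent hb
    subst hb
    have := F.entry_col_zero heq hmem
    have hC : μ.colLen 0 ≤ a := by
      have := (mem_skew_iff.mp hmem).2
      rw [mem_iff_lt_colLen] at this
      omega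
    omega
  have cntb : ∀ i j m : ℕ,
      ((ρ.cells \ μ.cells).filter fun c =>
        ((c.1 < i ∨ (c.1 = i ∧ j + 1 ≤ c.2)) ∧ F.entry c.1 c.2 = m) ∧ c.2 ≠ 0).card =
      (((stripCol ρ).cells \ (stripCol μ).cells).filter fun c =>
        (c.1 < i ∨ (c.1 = i ∧ j ≤ c.2)) ∧ F.entry c.1 (c.2 + 1) = m).card := by
    intro i j m
    apply (Finset.card_bij (fun c _ => (c.1, c.2 + 1)) _ _ _).symm
    · rintro ⟨a, b⟩ hab
      rw [Finset.mem_filter] at hab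
      obtain ⟨hmem, hcond, hent⟩ := hab
      dsimp only at hcond hent
      rw [mem_skew_stripCol] at hmem
      refine Finset.mem_filter.mpr ⟨hmem, ⟨?_, ?_⟩, ?_⟩
      · show a < i ∨ (a = i ∧ j + 1 ≤ b + 1)
        omega
      · exact hent
      · show b + 1 ≠ 0
        omega
    · rintro ⟨a, b⟩ _ ⟨a', b'⟩ _ hab
      simp only [Prod.mk.injEq] at hab ⊢
      omega
    · rintro ⟨x, y⟩ hxy
      rw [Finset.mem_filter] at hxy
      obtain ⟨hmem, ⟨hcond, hent⟩, hy⟩ := hxy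
      dsimp only at hcond hent hy
      have hy1 : y - 1 + 1 = y := by omega
      have hm1 : ((x : ℕ), y - 1) ∈ (stripCol ρ).cells \ (stripCol μ).cells := by
        rw [mem_skew_stripCol, hy1]
        exact hmem
      have hm2 : x < i ∨ (x = i ∧ j ≤ y - 1) := by omega
      have hm3 : F.entry x (y - 1 + 1) = m := by rw [hy1]; exact hent
      exact ⟨(x, y - 1), Finset.mem_filter.mpr ⟨hm1, hm2, hm3⟩,
        by show ((x : ℕ), y - 1 + 1) = (x, y); rw [hy1]⟩
  have cnt0 : ∀ i j m : ℕ, m < ν.colLen 0 →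
      ((ρ.cells \ μ.cells).filter fun c =>
        ((c.1 < i ∨ (c.1 = i ∧ j + 1 ≤ c.2)) ∧ F.entry c.1 c.2 = m) ∧ c.2 = 0).card =
      (if μ.colLen 0 + m < i then 1 else 0) := by
    intro i j m hm
    split_ifs with hi
    · rw [Finset.card_eq_one]
      refine ⟨(μ.colLen 0 + m, 0), ?_⟩
      ext ⟨a, b⟩
      simp only [Finset.mem_filter, Finset.mem_singleton, Prod.mk.injEq]
      constructor
      · rintro ⟨hmem, ⟨hcond, hent⟩, hb⟩
        exact ⟨hval a b m hmem hent hb, hb⟩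
      · rintro ⟨rfl, rfl⟩
        obtain ⟨hmem, hent⟩ := F.col0_mem heq hm
        exact ⟨hmem, ⟨Or.inl hi, hent⟩, rfl⟩
    · rw [Finset.card_eq_zero, Finset.filter_eq_empty_iff]
      rintro ⟨a, b⟩ hmem ⟨⟨hcond, hent⟩, hb⟩
      dsimp only at hcond hent hb
      have := hval a b m hmem hent hb
      omega
  have cnt : ∀ i j m : ℕ, m < ν.colLen 0 →
      ((ρ.cells \ μ.cells).filter fun c =>
        (c.1 < i ∨ (c.1 = i ∧ j + 1 ≤ c.2)) ∧ F.entry c.1 c.2 = m).card =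
      (((stripCol ρ).cells \ (stripCol μ).cells).filter fun c =>
        (c.1 < i ∨ (c.1 = i ∧ j ≤ c.2)) ∧ F.entry c.1 (c.2 + 1) = m).card +
      (if μ.colLen 0 + m < i then 1 else 0) := by
    intro i j m hm
    have hsplit := Finset.card_filter_add_card_filter_not
      (s := (ρ.cells \ μ.cells).filter fun c =>
        (c.1 < i ∨ (c.1 = i ∧ j + 1 ≤ c.2)) ∧ F.entry c.1 c.2 = m)
      (p := fun c => c.2 ≠ 0)
    rw [Finset.filter_filter, Finset.filter_filter] at hsplit
    have e1 := cntb i j m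
    have e2 := cnt0 i j m hm
    have hne : ((ρ.cells \ μ.cells).filter fun c =>
        ((c.1 < i ∨ (c.1 = i ∧ j + 1 ≤ c.2)) ∧ F.entry c.1 c.2 = m) ∧ ¬c.2 ≠ 0).card =
        ((ρ.cells \ μ.cells).filter fun c =>
        ((c.1 < i ∨ (c.1 = i ∧ j + 1 ≤ c.2)) ∧ F.entry c.1 c.2 = m) ∧ c.2 = 0).card := by
      congr 1
      apply Finset.filter_congr
      intro c _
      constructor
      · rintro ⟨h1, h2⟩; exact ⟨h1, by omega⟩
      · rintro ⟨h1, h2⟩; exact ⟨h1, by omega⟩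
    omega
  -- no entries with value ≥ ν.colLen 0
  have hnoval : ∀ i j m : ℕ, ¬ m < ν.colLen 0 →
      (((stripCol ρ).cells \ (stripCol μ).cells).filter fun c =>
        (c.1 < i ∨ (c.1 = i ∧ j ≤ c.2)) ∧ F.entry c.1 (c.2 + 1) = m).card = 0 := by
    intro i j m hm
    rw [Finset.card_eq_zero, Finset.filter_eq_empty_iff]
    rintro ⟨a, b⟩ hmem ⟨hcond, hent⟩
    dsimp only at hcond hent
    rw [mem_skew_stripCol] at hmem
    exact hm (F.entry_lt_of_mem hmem hent)
  refine ⟨⟨stripCol_mono F.le, fun a b => F.entry a (b + 1), ?_, ?_, ?_, ?_, ?_⟩⟩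
  · intro a b hab
    rw [mem_skew_stripCol] at hab
    exact F.zeros a (b + 1) hab
  · intro a b h1 h2
    rw [mem_skew_stripCol] at h1 h2
    exact F.row_weak a (b + 1) h1 h2
  · intro a b h1 h2
    rw [mem_skew_stripCol] at h1 h2
    exact F.col_strict a (b + 1) h1 h2
  · -- content
    intro k
    rw [rowLen_stripCol]
    by_cases hk : k < ν.colLen 0
    · have herase : (((ρ.cells \ μ.cells).filter fun c => F.entry c.1 c.2 = k).erase
          (μ.colLen 0 + k, 0)).card = ν.rowLen k - 1 := by
        rw [Finset.card_erase_of_mem, F.content k]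
        obtain ⟨hmem, hent⟩ := F.col0_mem heq hk
        exact Finset.mem_filter.mpr ⟨hmem, hent⟩
      rw [← herase]
      apply Finset.card_bij (fun c _ => (c.1, c.2 + 1))
      · rintro ⟨a, b⟩ hab
        rw [Finset.mem_filter] at hab
        obtain ⟨hmem, hent⟩ := hab
        dsimp only at hent
        rw [mem_skew_stripCol] at hmem
        refine Finset.mem_erase.mpr ⟨?_, Finset.mem_filter.mpr ⟨hmem, hent⟩⟩
        intro hcontra
        rw [Prod.mk.injEq] at hcontra
        omega
      · rintro ⟨a, b⟩ _ ⟨a', b'⟩ _ hab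
        simp only [Prod.mk.injEq] at hab ⊢
        omega
      · rintro ⟨x, y⟩ hxy
        rw [Finset.mem_erase, Finset.mem_filter] at hxy
        obtain ⟨hne, hmem, hent⟩ := hxy
        dsimp only at hent
        have hy : y ≠ 0 := by
          intro hy0
          exact hne (by
            rw [hy0] at hmem hent ⊢
            have := hval x 0 k hmem hent rfl
            rw [this])
        have hy1 : y - 1 + 1 = y := by omega
        have hm1 : ((x : ℕ), y - 1) ∈ (stripCol ρ).cells \ (stripCol μ).cells := by
          rw [mem_skew_stripCol, hy1]
          exact hmem
        have hm3 : F.entry x (y - 1 + 1) = k := by rw [hy1]; exact hent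
        exact ⟨(x, y - 1), Finset.mem_filter.mpr ⟨hm1, hm3⟩,
          by show ((x : ℕ), y - 1 + 1) = (x, y); rw [hy1]⟩
    · have hr0 : ν.rowLen k = 0 := by
        by_contra hc
        have : (k, 0) ∈ ν := mem_iff_lt_rowLen.mpr (by omega)
        rw [mem_iff_lt_colLen] at this
        omega
      rw [hr0]
      rw [Nat.zero_sub, Finset.card_eq_zero, Finset.filter_eq_empty_iff]
      rintro ⟨a, b⟩ hmem hent
      dsimp only at hent
      rw [mem_skew_stripCol] at hmem
      exact hk (F.entry_lt_of_mem hmem hent)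
  · -- lattice
    intro i j k
    show (((stripCol ρ).cells \ (stripCol μ).cells).filter fun c =>
        (c.1 < i ∨ (c.1 = i ∧ j ≤ c.2)) ∧ F.entry c.1 (c.2 + 1) = k + 1).card ≤
      (((stripCol ρ).cells \ (stripCol μ).cells).filter fun c =>
        (c.1 < i ∨ (c.1 = i ∧ j ≤ c.2)) ∧ F.entry c.1 (c.2 + 1) = k).card
    by_cases hk1 : k + 1 < ν.colLen 0
    · have hk : k < ν.colLen 0 := by omega
      have c1 := cnt i j k hk
      have c2 := cnt i j (k + 1) hk1
      have hlat := F.lattice i (j + 1) k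
      by_cases hik1 : μ.colLen 0 + (k + 1) < i
      · have hik : μ.colLen 0 + k < i := by omega
        rw [if_pos hik1] at c2
        rw [if_pos hik] at c1
        omega
      · by_cases hik : μ.colLen 0 + k < i
        · -- the delicate middle case : i ≤ Cμ + k + 1 ≤ i, F strict drop needed
          rw [if_neg hik1] at c2
          rw [if_pos hik] at c1
          have hOk : ((ρ.cells \ μ.cells).filter fun c =>
              (c.1 < i ∨ (c.1 = i ∧ j + 1 ≤ c.2)) ∧ F.entry c.1 c.2 = k).card =
              ν.rowLen k := by
            rw [← F.content k]
            congr 1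
            apply Finset.filter_congr
            intro c hc
            constructor
            · rintro ⟨_, h2⟩; exact h2
            · intro h2
              refine ⟨Or.inl ?_, h2⟩
              have hle := F.row_le_of_entry (a := c.1) (b := c.2) (by
                rwa [Prod.mk.eta])
              rw [h2] at hle
              omega
          have hOk1 : ((ρ.cells \ μ.cells).filter fun c =>
              (c.1 < i ∨ (c.1 = i ∧ j + 1 ≤ c.2)) ∧ F.entry c.1 c.2 = k + 1).card ≤
              ν.rowLen (k + 1) - 1 := by
            have hsub : ((ρ.cells \ μ.cells).filter fun c =>
                (c.1 < i ∨ (c.1 = i ∧ j + 1 ≤ c.2)) ∧ F.entry c.1 c.2 = k + 1) ⊆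
                ((ρ.cells \ μ.cells).filter fun c => F.entry c.1 c.2 = k + 1).erase
                  (μ.colLen 0 + (k + 1), 0) := by
              rintro ⟨a, b⟩ hab
              rw [Finset.mem_filter] at hab
              obtain ⟨hmem, hcond, hent⟩ := hab
              dsimp only at hcond hent
              refine Finset.mem_erase.mpr ⟨?_, Finset.mem_filter.mpr ⟨hmem, hent⟩⟩
              intro hcontra
              rw [Prod.mk.injEq] at hcontra
              omega
            have := Finset.card_le_card hsub
            rw [Finset.card_erase_of_mem, F.content (k + 1)] at this
            · exact this
            · obtain ⟨hmem, hent⟩ := F.col0_mem heq hk1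
              exact Finset.mem_filter.mpr ⟨hmem, hent⟩
          have hanti : ν.rowLen (k + 1) ≤ ν.rowLen k := ν.rowLen_anti k (k + 1) (by omega)
          omega
        · rw [if_neg hik1] at c2
          rw [if_neg hik] at c1
          omega
    · rw [hnoval i j (k + 1) hk1]
      exact Nat.zero_le _

end LRFilling

end Vside

section Main

open YoungDiagram

lemma wNotation_cons_true (w : List Bool) (lam : YoungDiagram) :
    wNotation (true :: w) lam = lam.rowLen 0 :: wNotation w (stripRow lam) := by
  show (lam.rowLen 0 - 0) :: wPieces w (0 + 1) 0 lam = _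
  rw [wPieces_stripRow, Nat.sub_zero, wNotation]

lemma wNotation_cons_false (w : List Bool) (lam : YoungDiagram) :
    wNotation (false :: w) lam = lam.colLen 0 :: wNotation w (stripCol lam) := by
  show (lam.colLen 0 - 0) :: wPieces w 0 (0 + 1) lam = _
  rw [wPieces_stripCol, Nat.sub_zero, wNotation]

lemma wmax (w : List Bool) : ∀ μ ν ρ π : YoungDiagram,
    Nonempty (LRFilling ρ μ ν) →
    wNotation w π = List.zipWith (· + ·) (wNotation w μ) (wNotation w ν) →
    lexLE (wNotation w ρ) (wNotation w π) := by
  induction w with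
  | nil => intro μ ν ρ π _ _; exact Or.inl rfl
  | cons b w ih =>
    intro μ ν ρ π hne hπ
    obtain ⟨F⟩ := hne
    cases b
    · -- a `v` letter : compare first columns
      simp only [wNotation_cons_false, List.zipWith_cons_cons] at hπ ⊢
      injection hπ with hhead htail
      have hle := F.colLen_zero_le
      rcases Nat.lt_or_ge (ρ.colLen 0) (π.colLen 0) with hlt | hge
      · exact Or.inr (List.Lex.rel hlt)
      · have heq : ρ.colLen 0 = μ.colLen 0 + ν.colLen 0 := by omega
        have hπeq : ρ.colLen 0 = π.colLen 0 := by omega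
        obtain ⟨F'⟩ := F.stripCol_nonempty heq
        have htail' := ih (stripCol μ) (stripCol ν) (stripCol ρ) (stripCol π) ⟨F'⟩ htail
        rw [hπeq]
        rcases htail' with h | h
        · exact Or.inl (by rw [h])
        · exact Or.inr (List.Lex.cons h)
    · -- an `h` letter : compare first rows
      simp only [wNotation_cons_true, List.zipWith_cons_cons] at hπ ⊢
      injection hπ with hhead htail
      have hle := F.rowLen_zero_le
      rcases Nat.lt_or_ge (ρ.rowLen 0) (π.rowLen 0) with hlt | hge
      · exact Or.inr (List.Lex.rel hlt)
      · have heq : ρ.rowLen 0 = μ.rowLen 0 + ν.rowLen 0 := by omega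
        have hπeq : ρ.rowLen 0 = π.rowLen 0 := by omega
        obtain ⟨F'⟩ := F.stripRow_nonempty heq
        have htail' := ih (stripRow μ) (stripRow ν) (stripRow ρ) (stripRow π) ⟨F'⟩ htail
        rw [hπeq]
        rcases htail' with h | h
        · exact Or.inl (by rw [h])
        · exact Or.inr (List.Lex.cons h)

end Main

/-- With `w`, `μ`, `ν` as in the lemma and `π` the partition whose
`w`-notation is the entrywise sum of those of `μ` and `ν`, every partition `ρ` with
`c^ρ_{μν} ≠ 0` satisfies `ρ^w ≤ π^w` in lexicographic order: `π` is `w`-maximal among the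
partitions appearing in `s_μ ⬝ s_ν`. -/
theorem statement1 (c d : ℕ) (w : List Bool) (hlen : w.length = c + d)
    (hc : w.count true = c) (hd : w.count false = d)
    (μ ν : YoungDiagram) (hμ : μ.rowLen c ≤ d) (hν : ν.rowLen c ≤ d)
    (π : YoungDiagram)
    (hπ : wNotation w π = List.zipWith (· + ·) (wNotation w μ) (wNotation w ν)) :
    ∀ ρ : YoungDiagram, lrCoeff ρ μ ν ≠ 0 → lexLE (wNotation w ρ) (wNotation w π) := by
  intro ρ hρ
  have hne : Nonempty (LRFilling ρ μ ν) := by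
    by_contra h
    rw [not_nonempty_iff] at h
    exact hρ Nat.card_of_isEmpty
  exact wmax w μ ν ρ π hne hπ
end

section
/- Let b be a positive integer, R = (b, b), and let λ = (λ₁, λ₂) be a partition with b ≥ λ₁ ≥ λ₂ ≥ 0 and λ₁ + λ₂ ≥ b, so that λ^c = (b − λ₂, b − λ₁). Let π = (2λ₁ − λ₂, λ₂, b − λ₁, b − λ₁). Then π is a partition and the Littlewood–Richardson coefficient c^π_{λ, λ^c} equals 1; equivalently, there is exactly one Littlewood–Richardson skew tableau of shape π/λ and content λ^c. -/
open scoped Classical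

lemma rowLen_eq_of' {μ : YoungDiagram} {k n : ℕ} (h : ∀ j, (k, j) ∈ μ ↔ j < n) :
    μ.rowLen k = n := by
  have h1 := (h (μ.rowLen k)).symm
  have h2 := h n
  rw [YoungDiagram.mem_iff_lt_rowLen] at h1 h2
  omega

lemma card_eq_of_row' (t : Finset (ℕ × ℕ)) (r : ℕ) (s : Finset ℕ)
    (h : ∀ c : ℕ × ℕ, c ∈ t ↔ c.1 = r ∧ c.2 ∈ s) : t.card = s.card := by
  have ht : t = {r} ×ˢ s := by
    ext c
    rw [h c, Finset.mem_product, Finset.mem_singleton]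
  rw [ht, Finset.card_product, Finset.card_singleton, one_mul]

lemma card_eq_of_two_rows' (t : Finset (ℕ × ℕ)) (r1 r2 : ℕ) (s1 s2 : Finset ℕ)
    (hr : r1 ≠ r2)
    (h : ∀ c : ℕ × ℕ, c ∈ t ↔ (c.1 = r1 ∧ c.2 ∈ s1) ∨ (c.1 = r2 ∧ c.2 ∈ s2)) :
    t.card = s1.card + s2.card := by
  have ht : t = {r1} ×ˢ s1 ∪ {r2} ×ˢ s2 := by
    ext c
    rw [h c, Finset.mem_union, Finset.mem_product, Finset.mem_product,
      Finset.mem_singleton, Finset.mem_singleton]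
  have hd : Disjoint ({r1} ×ˢ s1) ({r2} ×ˢ s2 : Finset (ℕ × ℕ)) := by
    rw [Finset.disjoint_left]
    rintro ⟨i, j⟩ hc1 hc2
    rw [Finset.mem_product, Finset.mem_singleton] at hc1 hc2
    exact hr (hc1.1 ▸ hc2.1 ▸ rfl)
  rw [ht, Finset.card_union_of_disjoint hd]
  simp [Finset.card_product]

/-- For `R = (b, b)` and `lam = (l₁, l₂)` with `b ≥ l₁ ≥ l₂ ≥ 0` and
`l₁ + l₂ ≥ b` (so `lamᶜ = (b - l₂, b - l₁)`), the 4-row shape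
`π = (2l₁ - l₂, l₂, b - l₁, b - l₁)` is a partition and `c^π_{lam, lamᶜ} = 1`: there is
exactly one Littlewood–Richardson filling of shape `π/lam` and content `lamᶜ`. -/
theorem statement8 (b l1 l2 : ℕ) (hb : 0 < b) (h1 : l1 ≤ b) (h21 : l2 ≤ l1)
    (hsum : b ≤ l1 + l2) :
    lrCoeff
      (YoungDiagram.ofRowLens [2 * l1 - l2, l2, b - l1, b - l1]
        (by simp [List.sortedGE_iff_pairwise]; omega))
      (YoungDiagram.ofRowLens [l1, l2] (by simp [List.sortedGE_iff_pairwise]; omega))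
      (YoungDiagram.ofRowLens [b - l2, b - l1] (by simp [List.sortedGE_iff_pairwise]; omega)) = 1 := by
  set ν := YoungDiagram.ofRowLens [2 * l1 - l2, l2, b - l1, b - l1]
    (by simp [List.sortedGE_iff_pairwise]; omega) with hνdef
  set lam := YoungDiagram.ofRowLens [l1, l2] (by simp [List.sortedGE_iff_pairwise]; omega) with hlamdef
  set μ := YoungDiagram.ofRowLens [b - l2, b - l1] (by simp [List.sortedGE_iff_pairwise]; omega)
    with hμdef
  have hmemν : ∀ i j : ℕ, ((i, j) ∈ ν ↔
      (i = 0 ∧ j < 2 * l1 - l2) ∨ (i = 1 ∧ j < l2) ∨ (i = 2 ∧ j < b - l1) ∨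
        (i = 3 ∧ j < b - l1)) := by
    intro i j
    rw [hνdef, YoungDiagram.mem_ofRowLens]
    rcases i with _ | _ | _ | _ | i <;> simp <;> omega
  have hmemlam : ∀ i j : ℕ, ((i, j) ∈ lam ↔ (i = 0 ∧ j < l1) ∨ (i = 1 ∧ j < l2)) := by
    intro i j
    rw [hlamdef, YoungDiagram.mem_ofRowLens]
    rcases i with _ | _ | i <;> simp <;> omega
  have hmemμ : ∀ i j : ℕ, ((i, j) ∈ μ ↔ (i = 0 ∧ j < b - l2) ∨ (i = 1 ∧ j < b - l1)) := by
    intro i j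
    rw [hμdef, YoungDiagram.mem_ofRowLens]
    rcases i with _ | _ | i <;> simp <;> omega
  have hS : ∀ i j : ℕ, ((i, j) ∈ ν.cells \ lam.cells ↔
      (i = 0 ∧ l1 ≤ j ∧ j < 2 * l1 - l2) ∨ (i = 2 ∧ j < b - l1) ∨ (i = 3 ∧ j < b - l1)) := by
    intro i j
    rw [Finset.mem_sdiff, YoungDiagram.mem_cells, YoungDiagram.mem_cells, hmemν, hmemlam]
    omega
  have hle : lam ≤ ν := by
    intro c hc
    obtain ⟨i, j⟩ := c
    rw [hmemlam] at hc
    rw [hmemν]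
    omega
  have hμ0 : μ.rowLen 0 = b - l2 := rowLen_eq_of' fun j => by rw [hmemμ]; omega
  have hμ1 : μ.rowLen 1 = b - l1 := rowLen_eq_of' fun j => by rw [hmemμ]; omega
  have hμk : ∀ k, 2 ≤ k → μ.rowLen k = 0 := fun k hk =>
    rowLen_eq_of' fun j => by rw [hmemμ]; omega
  set e0 : ℕ → ℕ → ℕ := fun i j => if i = 3 ∧ j < b - l1 then 1 else 0 with he0
  have F0 : LRFilling ν lam μ := by
    refine ⟨hle, e0, ?_, ?_, ?_, ?_, ?_⟩
    · intro i j hij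
      rw [hS] at hij
      simp only [he0]
      rw [if_neg (by omega)]
    · intro i j hc hc'
      rw [hS] at hc hc'
      simp only [he0]
      split <;> split <;> omega
    · intro i j hc hc'
      rw [hS] at hc hc'
      simp only [he0]
      rw [if_neg (by omega), if_pos (by omega)]
      omega
    · intro k
      match k with
      | 0 =>
        rw [hμ0]
        refine card_eq_of_two_rows' _ 0 2 (Finset.Ico l1 (2 * l1 - l2))
          (Finset.range (b - l1)) (by omega) ?_ |>.trans (by
            rw [Nat.card_Ico, Finset.card_range]; omega)
        rintro ⟨i, j⟩
        simp only [Finset.mem_filter, hS, he0, Finset.mem_Ico, Finset.mem_range]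
        split_ifs with h <;> simp <;> omega
      | 1 =>
        rw [hμ1]
        refine card_eq_of_row' _ 3 (Finset.range (b - l1)) ?_ |>.trans (by
          rw [Finset.card_range])
        rintro ⟨i, j⟩
        simp only [Finset.mem_filter, hS, he0, Finset.mem_range]
        split_ifs with h <;> simp <;> omega
      | (k + 2) =>
        rw [hμk _ (by omega), Finset.card_eq_zero, Finset.filter_eq_empty_iff]
        rintro ⟨i, j⟩ hij
        simp only [he0]
        split <;> omega
    · intro i j k
      match k with
      | 0 =>
        by_cases hi3 : 3 ≤ i
        · calc ((ν.cells \ lam.cells).filter fun c =>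
                (c.1 < i ∨ (c.1 = i ∧ j ≤ c.2)) ∧ e0 c.1 c.2 = 0 + 1).card
              ≤ ({3} ×ˢ Finset.range (b - l1)).card := by
                apply Finset.card_le_card
                rintro ⟨i', j'⟩ hc
                simp only [Finset.mem_filter, hS, he0] at hc
                obtain ⟨_, _, hval⟩ := hc
                rw [Finset.mem_product, Finset.mem_singleton, Finset.mem_range]
                by_cases h3 : i' = 3 ∧ j' < b - l1
                · exact h3
                · rw [if_neg h3] at hval; omega
            _ = b - l1 := by
                rw [Finset.card_product, Finset.card_singleton, Finset.card_range, one_mul]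
            _ ≤ _ := by
                have : ({2} ×ˢ Finset.range (b - l1) : Finset (ℕ × ℕ)) ⊆
                    (ν.cells \ lam.cells).filter fun c =>
                      (c.1 < i ∨ (c.1 = i ∧ j ≤ c.2)) ∧ e0 c.1 c.2 = 0 := by
                  rintro ⟨i', j'⟩ hc
                  rw [Finset.mem_product, Finset.mem_singleton, Finset.mem_range] at hc
                  simp only [Finset.mem_filter, hS, he0]
                  exact ⟨by omega, by omega, by rw [if_neg (by omega)]⟩
                calc b - l1 = ({2} ×ˢ Finset.range (b - l1) : Finset (ℕ × ℕ)).card := by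
                      rw [Finset.card_product, Finset.card_singleton, Finset.card_range,
                        one_mul]
                  _ ≤ _ := Finset.card_le_card this
        · have hemp : ((ν.cells \ lam.cells).filter fun c =>
              (c.1 < i ∨ (c.1 = i ∧ j ≤ c.2)) ∧ e0 c.1 c.2 = 0 + 1) = ∅ := by
            rw [Finset.filter_eq_empty_iff]
            rintro ⟨i', j'⟩ hc
            rw [hS] at hc
            simp only [he0]
            rintro ⟨hpos, hval⟩
            split at hval <;> omega
          rw [hemp]
          simp
      | (k + 1) =>
        have hemp : ((ν.cells \ lam.cells).filter fun c =>
            (c.1 < i ∨ (c.1 = i ∧ j ≤ c.2)) ∧ e0 c.1 c.2 = k + 1 + 1) = ∅ := by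
          rw [Finset.filter_eq_empty_iff]
          rintro ⟨i', j'⟩ hc
          simp only [he0]
          rintro ⟨hpos, hval⟩
          split at hval <;> omega
        rw [hemp]
        simp
  have huniq : ∀ F : LRFilling ν lam μ, F.entry = e0 := by
    intro F
    have hle1 : ∀ i j : ℕ, (i, j) ∈ ν.cells \ lam.cells → F.entry i j ≤ 1 := by
      intro i j hij
      by_contra hgt
      have hmem : (i, j) ∈ (ν.cells \ lam.cells).filter
          (fun c => F.entry c.1 c.2 = F.entry i j) := by
        rw [Finset.mem_filter]
        exact ⟨hij, rfl⟩
      have hc := F.content (F.entry i j)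
      rw [hμk _ (by omega), Finset.card_eq_zero] at hc
      rw [hc] at hmem
      exact absurd hmem (Finset.notMem_empty _)
    have hrow23 : ∀ j, j < b - l1 → F.entry 2 j = 0 ∧ F.entry 3 j = 1 := by
      intro j hj
      have h2 : (2, j) ∈ ν.cells \ lam.cells := by rw [hS]; omega
      have h3 : (3, j) ∈ ν.cells \ lam.cells := by rw [hS]; omega
      have hcs := F.col_strict 2 j h2 h3
      norm_num at hcs
      have := hle1 3 j h3
      omega
    have hones : ((ν.cells \ lam.cells).filter fun c => F.entry c.1 c.2 = 1) =
        {3} ×ˢ Finset.range (b - l1) := by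
      refine (Finset.eq_of_subset_of_card_le ?_ ?_).symm
      · rintro ⟨i, j⟩ hc
        have hc'' : j < b - l1 ∧ 3 = i := by simpa using hc
        have hc' : i = 3 ∧ j < b - l1 := ⟨hc''.2.symm, hc''.1⟩
        rw [Finset.mem_filter]
        obtain ⟨rfl, h2⟩ := hc'
        exact ⟨by rw [hS]; omega, (hrow23 j h2).2⟩
      · rw [F.content 1, hμ1, Finset.card_product, Finset.card_singleton,
          Finset.card_range, one_mul]
    have hnot1 : ∀ i j : ℕ, (i, j) ∈ ν.cells \ lam.cells → i ≠ 3 → F.entry i j = 0 := by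
      intro i j hij hi
      have hl := hle1 i j hij
      rcases Nat.lt_or_ge (F.entry i j) 1 with h | h
      · omega
      · exfalso
        have hmem : (i, j) ∈ ((ν.cells \ lam.cells).filter fun c => F.entry c.1 c.2 = 1) := by
          rw [Finset.mem_filter]
          exact ⟨hij, show F.entry i j = 1 by omega⟩
        rw [hones, Finset.mem_product, Finset.mem_singleton] at hmem
        exact hi hmem.1
    funext i j
    by_cases hij : (i, j) ∈ ν.cells \ lam.cells
    · have hij' := hij
      rw [hS] at hij'
      simp only [he0]
      rcases hij' with ⟨rfl, h⟩ | ⟨rfl, h⟩ | ⟨rfl, h⟩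
      · rw [if_neg (by omega)]; exact hnot1 0 j hij (by omega)
      · rw [if_neg (by omega)]; exact (hrow23 j h).1
      · rw [if_pos (by omega)]; exact (hrow23 j h).2
    · rw [F.zeros i j hij]
      have hns := (hS i j).not.mp hij
      simp only [he0]
      rw [if_neg (by omega)]
  rw [lrCoeff, Nat.card_eq_one_iff_unique]
  refine ⟨⟨fun F G => ?_⟩, ⟨F0⟩⟩
  have hF := huniq F
  have hG := huniq G
  cases F; cases G
  simp only at hF hG
  subst hF; subst hG
  rfl
end
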